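/- arXiv:2205.02224 — 4 statements merged into one kernel-verified Lean document; each statement's English description precedes it below -/
import Mathlib

section
/- For constants M ≥ m > 0 and Γ ≥ 1, the function f(w) = ((M−m)w + m)/((M−m)w/Γ + m) on [0,1] is bounded above by Γ·(M/m)/(Γ + M/m − 1). -/
/-!
Writing `t = (M - m) w`, the ratio is `(t + m) / (t / Γ + m)`, which is nondecreasing in `t ≥ 0`
because `Γ ≥ 1`. Its maximum over `w ∈ [0, 1]` is therefore attained at `t = M - m`, where it equals
`Γ M / (M - m + Γ m) = Γ (M / m) / (Γ + M / m - 1)`.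
-/

noncomputable def attenuatedRatio (m Γ t : ℝ) : ℝ := (t + m) / (t / Γ + m)

lemma attenuatedRatio_monotoneOn {m Γ : ℝ} (hm : 0 < m) (hΓ : 1 ≤ Γ) :
    MonotoneOn (attenuatedRatio m Γ) (Set.Ici 0) := by
  intro s (hs : 0 ≤ s) t (ht : 0 ≤ t) hst
  have hΓ0 : 0 < Γ := one_pos.trans_le hΓ
  rw [attenuatedRatio, attenuatedRatio, div_le_div_iff₀ (by positivity) (by positivity),
    div_add' _ _ _ hΓ0.ne', div_add' _ _ _ hΓ0.ne', mul_div_assoc', mul_div_assoc',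
    div_le_div_iff_of_pos_right hΓ0]
  -- the difference of the two sides is `m (t - s) (Γ - 1)`
  nlinarith [mul_nonneg (mul_nonneg hm.le (sub_nonneg.2 hst)) (sub_nonneg.2 hΓ)]

lemma attenuatedRatio_sub_eq_div {m M Γ : ℝ} (hm : 0 < m) (hMm : m ≤ M) (hΓ : 1 ≤ Γ) :
    attenuatedRatio m Γ (M - m) = Γ * (M / m) / (Γ + M / m - 1) := by
  have hΓ0 : 0 < Γ := one_pos.trans_le hΓ
  have hden : M - m + Γ * m ≠ 0 := by nlinarith
  rw [attenuatedRatio]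
  field_simp
  ring

theorem ratio_function_bound (m M Γ : ℝ) (hm : 0 < m) (hMm : m ≤ M) (hΓ : 1 ≤ Γ) :
    ∀ w ∈ Set.Icc (0 : ℝ) 1,
      ((M - m) * w + m) / ((M - m) * w / Γ + m) ≤ Γ * (M / m) / (Γ + M / m - 1) := by
  rintro w ⟨hw0, hw1⟩
  have hMm' : 0 ≤ M - m := sub_nonneg.2 hMm
  calc attenuatedRatio m Γ ((M - m) * w)
      ≤ attenuatedRatio m Γ (M - m) :=
        attenuatedRatio_monotoneOn hm hΓ (mul_nonneg hMm' hw0) hMm'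
          (mul_le_of_le_one_right hMm' hw1)
    _ = Γ * (M / m) / (Γ + M / m - 1) := attenuatedRatio_sub_eq_div hm hMm hΓ
end

section
/- Weighted-mean ratio bound (general density): Let r, ρ : U → ℝ be measurable with 0 < m ≤ r ≤ M and 0 < ρ(u) ≤ Γ for all u, where F_0 is a probability measure and ∫ ρ dF_0 = 1. Then ∫ r ρ dF_0 / ∫ r dF_0 ≤ Γ·(M/m)/(Γ + M/m − 1), provided Γ ≥ 1. -/
/-!
For `m ≤ x ≤ M` and `0 ≤ y ≤ Γ` the products `M (x - m) (Γ - y)` and `m (Γ - 1) (M - x) y` are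
nonnegative, and their sum is `Γ M x + Γ M m y - Γ M m - (m Γ + M - m) x y`. Integrating this with
`x = r u`, `y = ρ u`, the normalisation `∫ ρ = 1` cancels the constant term and leaves
`(m Γ + M - m) ∫ r ρ ≤ Γ M ∫ r`, which is the claim after dividing by `m ∫ r > 0`.
-/

open MeasureTheory

lemma mul_le_of_mem_Icc_of_mem_Icc {m M Γ x y : ℝ} (hm : 0 ≤ m) (hΓ : 1 ≤ Γ)
    (hxm : m ≤ x) (hxM : x ≤ M) (hy0 : 0 ≤ y) (hyΓ : y ≤ Γ) :
    (m * Γ + M - m) * (x * y) ≤ Γ * M * x + Γ * M * m * y - Γ * M * m := by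
  have h₁ : 0 ≤ M * (x - m) * (Γ - y) :=
    mul_nonneg (mul_nonneg (by linarith) (by linarith)) (by linarith)
  have h₂ : 0 ≤ m * (Γ - 1) * ((M - x) * y) :=
    mul_nonneg (mul_nonneg hm (by linarith)) (mul_nonneg (by linarith) hy0)
  linear_combination h₁ + h₂

lemma integral_mul_density_le {U : Type*} [MeasurableSpace U] (μ : Measure U)
    [IsProbabilityMeasure μ] {r ρ : U → ℝ} (hr : Integrable r μ) {m M Γ : ℝ} (hm : 0 ≤ m)
    (hrm : ∀ u, m ≤ r u) (hrM : ∀ u, r u ≤ M) (hΓ : 1 ≤ Γ) (hρ0 : ∀ u, 0 ≤ ρ u)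
    (hρΓ : ∀ u, ρ u ≤ Γ) (hρint : ∫ u, ρ u ∂μ = 1) :
    (m * Γ + M - m) * ∫ u, r u * ρ u ∂μ ≤ Γ * M * ∫ u, r u ∂μ := by
  have hρ_int : Integrable ρ μ := .of_integral_ne_zero (by simp [hρint])
  have hrρ_int : Integrable (fun u ↦ r u * ρ u) μ :=
    hρ_int.bdd_mul hr.aestronglyMeasurable (c := M) <| ae_of_all _ fun u ↦
      abs_le.2 ⟨by linarith [hrm u, hrM u], hrM u⟩
  have hsum_int : Integrable (fun u ↦ Γ * M * r u + Γ * M * m * ρ u) μ :=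
    (hr.const_mul _).add (hρ_int.const_mul _)
  calc (m * Γ + M - m) * ∫ u, r u * ρ u ∂μ
      = ∫ u, (m * Γ + M - m) * (r u * ρ u) ∂μ := (integral_const_mul _ _).symm
    _ ≤ ∫ u, Γ * M * r u + Γ * M * m * ρ u - Γ * M * m ∂μ :=
        integral_mono (hrρ_int.const_mul _)
          (hsum_int.sub (integrable_const _))
          fun u ↦ mul_le_of_mem_Icc_of_mem_Icc hm hΓ (hrm u) (hrM u) (hρ0 u) (hρΓ u)
    _ = Γ * M * ∫ u, r u ∂μ := by
        rw [integral_sub hsum_int (integrable_const _),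
          integral_add (hr.const_mul _) (hρ_int.const_mul _), integral_const_mul,
          integral_const_mul, hρint, integral_const, probReal_univ, one_smul]
        ring

theorem weighted_mean_ratio_bound_general_general {U : Type*} [MeasurableSpace U]
    (F0 : Measure U) [IsProbabilityMeasure F0]
    (r ρ : U → ℝ) (hr : Measurable r)
    (m M Γ : ℝ) (hm : 0 < m) (hrm : ∀ u, m ≤ r u) (hrM : ∀ u, r u ≤ M)
    (hΓ : 1 ≤ Γ) (hρ0 : ∀ u, 0 < ρ u) (hρΓ : ∀ u, ρ u ≤ Γ)
    (hρint : ∫ u, ρ u ∂F0 = 1) :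
    (∫ u, r u * ρ u ∂F0) / (∫ u, r u ∂F0) ≤ Γ * (M / m) / (Γ + M / m - 1) := by
  obtain ⟨u₀⟩ := nonempty_of_isProbabilityMeasure F0
  have hMm : 1 ≤ M / m := (one_le_div hm).2 ((hrm u₀).trans (hrM u₀))
  have hr_int : Integrable r F0 :=
    .of_mem_Icc m M hr.aemeasurable (ae_of_all _ fun u ↦ ⟨hrm u, hrM u⟩)
  have hB : 0 < ∫ u, r u ∂F0 :=
    hm.trans_le (by simpa using integral_mono (integrable_const m) hr_int hrm)
  have key := integral_mul_density_le F0 hr_int hm.le hrm hrM hΓ (fun u ↦ (hρ0 u).le) hρΓ hρint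
  rw [div_le_div_iff₀ hB (by linarith)]
  calc (∫ u, r u * ρ u ∂F0) * (Γ + M / m - 1)
      = (m * Γ + M - m) * (∫ u, r u * ρ u ∂F0) / m := by field_simp
    _ ≤ Γ * M * (∫ u, r u ∂F0) / m := by gcongr
    _ = Γ * (M / m) * ∫ u, r u ∂F0 := by ring

theorem weighted_mean_ratio_bound_general {U : Type*} [MeasurableSpace U]
    (F0 : Measure U) [IsProbabilityMeasure F0]
    (r ρ : U → ℝ) (hr : Measurable r) (hρ : Measurable ρ)
    (m M Γ : ℝ) (hm : 0 < m) (hrm : ∀ u, m ≤ r u) (hrM : ∀ u, r u ≤ M)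
    (hΓ : 1 ≤ Γ) (hρ0 : ∀ u, 0 < ρ u) (hρΓ : ∀ u, ρ u ≤ Γ)
    (hρint : ∫ u, ρ u ∂F0 = 1) :
    (∫ u, r u * ρ u ∂F0) / (∫ u, r u ∂F0) ≤ Γ * (M / m) / (Γ + M / m - 1) :=
  weighted_mean_ratio_bound_general_general F0 r ρ hr m M Γ hm hrm hrM hΓ hρ0 hρΓ hρint
end

section
/- If the counterfactual bounds E[Z(1)|A=0] ≥ m_1/B and E[Z(0)|A=1] ≤ m_0·B hold with B ≥ 1, m_0, m_1 ≥ 0, then the mixed average causal effect f·(m_1 − E[Z(0)|A=1]) + (1−f)·(E[Z(1)|A=0] − m_0) is at least (m_1 − m_0·B)(f + (1−f)/B) for any f ∈ [0,1]. -/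
theorem ace_lower_bound_general (m0 m1 B f c0 c1 : ℝ)
    (hB : 1 ≤ B)
    (hf0 : 0 ≤ f) (hf1 : f ≤ 1)
    (hc1 : m1 / B ≤ c1) (hc0 : c0 ≤ m0 * B) :
    (m1 - m0 * B) * (f + (1 - f) / B) ≤ f * (m1 - c0) + (1 - f) * (c1 - m0) := by
  have hB0 : B ≠ 0 := (zero_lt_one.trans_le hB).ne'
  have hf1' : 0 ≤ 1 - f := sub_nonneg.2 hf1
  calc (m1 - m0 * B) * (f + (1 - f) / B)
      = f * (m1 - m0 * B) + (1 - f) * (m1 / B - m0) := by field_simp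
    _ ≤ f * (m1 - c0) + (1 - f) * (c1 - m0) := by gcongr

theorem ace_lower_bound (m0 m1 B f c0 c1 : ℝ)
    (hm0 : 0 ≤ m0) (hm1 : 0 ≤ m1) (hB : 1 ≤ B)
    (hf0 : 0 ≤ f) (hf1 : f ≤ 1)
    (hc1 : m1 / B ≤ c1) (hc0 : c0 ≤ m0 * B) :
    (m1 - m0 * B) * (f + (1 - f) / B) ≤ f * (m1 - c0) + (1 - f) * (c1 - m0) :=
  ace_lower_bound_general m0 m1 B f c0 c1 hB hf0 hf1 hc1 hc0
end

section
/- Propensity score balancing for survival outcomes: if (T⁰, T¹) ⫫ A | X and e(X) = P(A=1|X), then P(A=1 | T⁰, T¹, e(X)) = e(X) almost surely; in particular (T⁰, T¹) ⫫ A | e(X), and since min(·, τ) is deterministic, also (min(T⁰,τ), min(T¹,τ)) ⫫ A | e(X). -/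
/-!
Since `A` is binary, the conditional law of `A` given `X` is an affine function of
`e = E[A | X]`, hence `σ(e)`-measurable. Conditional independence given `X` therefore descends
to `σ(e)`: by the tower property and pull-out,
`P(T ∈ s, A ∈ t | e) = E[P(T ∈ s | X) P(A ∈ t | X) | e] = P(T ∈ s | e) P(A ∈ t | e)`.
Conditional independence given `e` in turn makes additional conditioning on `T = (T⁰, T¹)`
irrelevant, by a π-λ argument over the sets `{T ∈ s} ∩ {e ∈ w}`, so
`E[A | T, e] = E[A | e] = e`.
-/

open MeasureTheory ProbabilityTheory MeasurableSpace Set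

theorem IsPiSystem.image2_inter {α : Type*} {S T : Set (Set α)} (hS : IsPiSystem S)
    (hT : IsPiSystem T) : IsPiSystem (image2 (· ∩ ·) S T) := by
  rintro _ ⟨a, ha, b, hb, rfl⟩ _ ⟨c, hc, d, hd, rfl⟩ hne
  rw [inter_inter_inter_comm] at hne ⊢
  exact mem_image2_of_mem (hS a ha c hc hne.left) (hT b hb d hd hne.right)

theorem MeasurableSpace.generateFrom_image2_inter {α : Type*} (m₁ m₂ : MeasurableSpace α) :
    generateFrom (image2 (· ∩ ·) {s | MeasurableSet[m₁] s} {s | MeasurableSet[m₂] s}) =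
      m₁ ⊔ m₂ := by
  refine le_antisymm (generateFrom_le ?_) (sup_le ?_ ?_)
  · rintro _ ⟨a, ha, b, hb, rfl⟩
    exact (le_sup_left (b := m₂) a ha).inter (le_sup_right (a := m₁) b hb)
  · exact fun s hs ↦
      measurableSet_generateFrom ⟨s, hs, univ, @MeasurableSet.univ _ m₂, inter_univ s⟩
  · exact fun s hs ↦
      measurableSet_generateFrom ⟨univ, @MeasurableSet.univ _ m₁, s, hs, univ_inter s⟩

theorem setIntegral_eq_of_isPiSystem {α E : Type*} [NormedAddCommGroup E] [NormedSpace ℝ E]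
    {m m₀ : MeasurableSpace α} {μ : Measure α} (hm : m ≤ m₀) {S : Set (Set α)}
    (hgen : m = generateFrom S) (hS : IsPiSystem S) {f g : α → E} (hf : Integrable f μ)
    (hg : Integrable g μ) (huniv : ∫ x, f x ∂μ = ∫ x, g x ∂μ)
    (hSfg : ∀ s ∈ S, ∫ x in s, f x ∂μ = ∫ x in s, g x ∂μ) {t : Set α}
    (ht : MeasurableSet[m] t) : ∫ x in t, f x ∂μ = ∫ x in t, g x ∂μ := by
  induction t, ht using induction_on_inter hgen hS with
  | empty => simp
  | basic s hs => exact hSfg s hs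
  | compl s hs hsfg =>
    rw [setIntegral_compl (hm s hs) hf, setIntegral_compl (hm s hs) hg, huniv, hsfg]
  | iUnion s hdisj hs hsfg =>
    rw [integral_iUnion (fun i ↦ hm _ (hs i)) hdisj hf.integrableOn,
      integral_iUnion (fun i ↦ hm _ (hs i)) hdisj hg.integrableOn]
    exact tsum_congr hsfg

theorem condExp_indicator_eq_mul {Ω : Type*} {m m₀ : MeasurableSpace Ω} {μ : Measure Ω}
    [IsFiniteMeasure μ] {c : Ω → ℝ} (hc : StronglyMeasurable[m] c) (hci : Integrable c μ)
    {s : Set Ω} (hs : MeasurableSet s) :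
    μ[s.indicator c | m] =ᵐ[μ] μ⟦s | m⟧ * c := by
  have hsc : s.indicator c = s.indicator (fun _ ↦ (1 : ℝ)) * c := by
    ext ω; by_cases hω : ω ∈ s <;> simp [hω]
  rw [hsc]
  exact condExp_mul_of_stronglyMeasurable_right hc (hsc ▸ hci.indicator hs)
    ((integrable_const 1).indicator hs)

theorem condExp_ae_eq_of_le_of_condExp_ae_eq {Ω : Type*} {m m' m₀ : MeasurableSpace Ω}
    {μ : Measure Ω} [IsFiniteMeasure μ] (hm' : m' ≤ m) (hm : m ≤ m₀) {f g : Ω → ℝ}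
    (hfg : μ[f | m] =ᵐ[μ] g) (hg : StronglyMeasurable[m'] g) : μ[f | m'] =ᵐ[μ] g := calc
  μ[f | m'] =ᵐ[μ] μ[μ[f | m] | m'] := (condExp_condExp_of_le hm' hm).symm
  _ =ᵐ[μ] μ[g | m'] := condExp_congr_ae hfg
  _ = g := condExp_of_stronglyMeasurable (hm'.trans hm) hg (integrable_condExp.congr hfg)

theorem aestronglyMeasurable_condExp_indicator_preimage_of_binary {Ω : Type*}
    {m m' m₀ : MeasurableSpace Ω} {μ : Measure Ω} [IsFiniteMeasure μ] (hm : m ≤ m₀)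
    {A : Ω → ℝ} (hA : Measurable A) (hAbin : ∀ ω, A ω = 0 ∨ A ω = 1)
    (hAm : AEStronglyMeasurable[m'] (μ[A | m]) μ) (t : Set ℝ) :
    AEStronglyMeasurable[m'] (μ⟦A ⁻¹' t | m⟧) μ := by
  set a := t.indicator (fun _ ↦ (1 : ℝ)) 0
  set b := t.indicator (fun _ ↦ (1 : ℝ)) 1
  have hAi : Integrable A μ := by
    refine .of_bound hA.aestronglyMeasurable 1 (.of_forall fun ω ↦ ?_)
    rcases hAbin ω with h | h <;> simp [h]
  have haffine : (A ⁻¹' t).indicator (fun _ ↦ (1 : ℝ)) = (fun _ ↦ a) + (b - a) • A := by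
    ext ω
    change t.indicator (fun _ ↦ (1 : ℝ)) (A ω) = _
    rcases hAbin ω with h | h <;> simp [a, b, h]
  have hcond : μ⟦A ⁻¹' t | m⟧ =ᵐ[μ] fun ω ↦ a + (b - a) • μ[A | m] ω := by
    rw [haffine]
    filter_upwards [condExp_add (integrable_const a) (hAi.smul (b - a)) m,
      condExp_smul (b - a) A m] with ω hadd hsmul
    rw [hadd, Pi.add_apply, hsmul, condExp_const hm]
    rfl
  exact ((hAm.const_smul (b - a)).const_add a).congr hcond.symm

section CondIndep

variable {Ω β γ : Type*} {m m' mΩ : MeasurableSpace Ω} [StandardBorelSpace Ω] {μ : Measure Ω}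
  [IsFiniteMeasure μ] [MeasurableSpace β] [MeasurableSpace γ] {f : Ω → β} {g : Ω → γ}

theorem CondIndepFun.of_le_of_condExp_aestronglyMeasurable {hm : m ≤ mΩ} (hm' : m' ≤ m)
    (hf : Measurable f) (hg : Measurable g) (hfg : CondIndepFun m hm f g μ)
    (hgm' : ∀ t, MeasurableSet t → AEStronglyMeasurable[m'] (μ⟦g ⁻¹' t | m⟧) μ) :
    CondIndepFun m' (hm'.trans hm) f g μ := by
  rw [condIndepFun_iff_condExp_inter_preimage_eq_mul hf hg] at hfg ⊢
  intro s t hs ht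
  obtain ⟨c, hc, hgc⟩ := hgm' t ht
  have hci : Integrable c μ := integrable_condExp.congr hgc
  have hgc' : μ⟦g ⁻¹' t | m'⟧ =ᵐ[μ] c := condExp_ae_eq_of_le_of_condExp_ae_eq hm' hm hgc hc
  calc μ⟦f ⁻¹' s ∩ g ⁻¹' t | m'⟧
      =ᵐ[μ] μ[μ⟦f ⁻¹' s ∩ g ⁻¹' t | m⟧ | m'] := (condExp_condExp_of_le hm' hm).symm
    _ =ᵐ[μ] μ[μ[(f ⁻¹' s).indicator c | m] | m'] := by
      refine condExp_congr_ae ((hfg s t hs ht).trans ?_)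
      filter_upwards [hgc, condExp_indicator_eq_mul (hc.mono hm') hci (hf hs)] with ω hω hω'
      rw [hω', Pi.mul_apply, hω]
    _ =ᵐ[μ] μ[(f ⁻¹' s).indicator c | m'] := condExp_condExp_of_le hm' hm
    _ =ᵐ[μ] μ⟦f ⁻¹' s | m'⟧ * c := condExp_indicator_eq_mul hc hci (hf hs)
    _ =ᵐ[μ] fun ω ↦ (μ⟦f ⁻¹' s | m'⟧) ω * (μ⟦g ⁻¹' t | m'⟧) ω := by
      filter_upwards [hgc'] with ω hω
      rw [Pi.mul_apply, hω]

theorem CondIndepFun.condExp_indicator_comap_sup {hm : m ≤ mΩ}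
    (hf : Measurable f) (hg : Measurable g) (hfg : CondIndepFun m hm f g μ) {t : Set γ}
    (ht : MeasurableSet t) :
    μ⟦g ⁻¹' t | MeasurableSpace.comap f inferInstance ⊔ m⟧ =ᵐ[μ] μ⟦g ⁻¹' t | m⟧ := by
  rw [condIndepFun_iff_condExp_inter_preimage_eq_mul hf hg] at hfg
  have hsup : MeasurableSpace.comap f inferInstance ⊔ m ≤ mΩ := sup_le hf.comap_le hm
  set c := μ⟦g ⁻¹' t | m⟧
  have hci : Integrable c μ := integrable_condExp
  have hcm : StronglyMeasurable[m] c := stronglyMeasurable_condExp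
  have hcm' : AEStronglyMeasurable[MeasurableSpace.comap f inferInstance ⊔ m] c μ :=
    (hcm.mono (le_sup_right (a := MeasurableSpace.comap f inferInstance))).aestronglyMeasurable
  have hgt : Integrable ((g ⁻¹' t).indicator fun _ ↦ (1 : ℝ)) μ :=
    (integrable_const 1).indicator (hg ht)
  refine (ae_eq_condExp_of_forall_setIntegral_eq hsup hgt (fun _ _ _ ↦ hci.integrableOn)
    (fun u hu _ ↦ ?_) hcm').symm
  refine setIntegral_eq_of_isPiSystem hsup (generateFrom_image2_inter _ _).symm
    ((@isPiSystem_measurableSet Ω (.comap f inferInstance)).image2_inter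
      (@isPiSystem_measurableSet Ω m)) hci hgt (integral_condExp hm) ?_ hu
  rintro _ ⟨_, ⟨s, hs, rfl⟩, v, hv, rfl⟩
  calc ∫ ω in f ⁻¹' s ∩ v, c ω ∂μ
      = ∫ ω in v, (f ⁻¹' s).indicator c ω ∂μ := by
        rw [inter_comm, setIntegral_indicator (hf hs)]
    _ = ∫ ω in v, μ[(f ⁻¹' s).indicator c | m] ω ∂μ :=
        (setIntegral_condExp hm (hci.indicator (hf hs)) hv).symm
    _ = ∫ ω in v, (μ⟦f ⁻¹' s | m⟧ * c) ω ∂μ :=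
        setIntegral_congr_ae (hm v hv)
          ((condExp_indicator_eq_mul hcm hci (hf hs)).mono fun _ h _ ↦ h)
    _ = ∫ ω in v, (μ⟦f ⁻¹' s ∩ g ⁻¹' t | m⟧) ω ∂μ :=
        setIntegral_congr_ae (hm v hv) ((hfg s t hs ht).mono fun _ h _ ↦ h.symm)
    _ = ∫ ω in v, (f ⁻¹' s ∩ g ⁻¹' t).indicator (fun _ ↦ (1 : ℝ)) ω ∂μ :=
        setIntegral_condExp hm ((integrable_const 1).indicator ((hf hs).inter (hg ht))) hv
    _ = ∫ ω in f ⁻¹' s ∩ v, (g ⁻¹' t).indicator (fun _ ↦ (1 : ℝ)) ω ∂μ := by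
        rw [← indicator_indicator, setIntegral_indicator (hf hs), inter_comm]

end CondIndep

theorem propensity_score_balancing_survival_general {Ω : Type*} [MeasurableSpace Ω]
    [StandardBorelSpace Ω]
    (μ : Measure Ω) [IsProbabilityMeasure μ]
    {E : Type*} [MeasurableSpace E]
    (X : Ω → E) (T0 T1 A e : Ω → ℝ)
    (hX : Measurable X) (hT0 : Measurable T0) (hT1 : Measurable T1)
    (hA : Measurable A) (he : Measurable e)
    (hAbin : ∀ ω, A ω = 0 ∨ A ω = 1)
    -- e(X) is the propensity score: e = P(A = 1 | X), and is σ(X)-measurable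
    (heX : Measurable[MeasurableSpace.comap X inferInstance] e)
    (hps : μ[A | MeasurableSpace.comap X inferInstance] =ᵐ[μ] e)
    -- conditional independence (T0, T1) ⫫ A | X
    (hci : CondIndepFun (MeasurableSpace.comap X inferInstance) (hX.comap_le)
      (fun ω => (T0 ω, T1 ω)) A μ)
    (τ : ℝ) :
    μ[A | MeasurableSpace.comap (fun ω => (T0 ω, T1 ω, e ω)) inferInstance] =ᵐ[μ] e ∧
    CondIndepFun (MeasurableSpace.comap e inferInstance) (he.comap_le)
      (fun ω => (T0 ω, T1 ω)) A μ ∧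
    CondIndepFun (MeasurableSpace.comap e inferInstance) (he.comap_le)
      (fun ω => (min (T0 ω) τ, min (T1 ω) τ)) A μ := by
  have hT : Measurable fun ω ↦ (T0 ω, T1 ω) := hT0.prodMk hT1
  have hee : StronglyMeasurable[MeasurableSpace.comap e inferInstance] e :=
    (comap_measurable e).stronglyMeasurable
  have hindep : CondIndepFun (MeasurableSpace.comap e inferInstance) he.comap_le
      (fun ω ↦ (T0 ω, T1 ω)) A μ :=
    CondIndepFun.of_le_of_condExp_aestronglyMeasurable heX.comap_le hT hA hci fun t _ ↦
      aestronglyMeasurable_condExp_indicator_preimage_of_binary hX.comap_le hA hAbin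
        ⟨e, hee, hps⟩ t
  have hA1 : (A ⁻¹' {1}).indicator (fun _ ↦ (1 : ℝ)) = A := by
    ext ω; rcases hAbin ω with h | h <;> simp [h]
  refine ⟨?_, hindep, hindep.comp
    ((measurable_fst.min measurable_const).prodMk (measurable_snd.min measurable_const))
    measurable_id⟩
  have hcomap : MeasurableSpace.comap (fun ω ↦ (T0 ω, T1 ω, e ω)) inferInstance =
      MeasurableSpace.comap (fun ω ↦ (T0 ω, T1 ω)) inferInstance ⊔
        MeasurableSpace.comap e inferInstance := by
    simp only [inferInstance, Prod.instMeasurableSpace, comap_prodMk, sup_assoc]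
  rw [hcomap, ← hA1]
  refine (CondIndepFun.condExp_indicator_comap_sup hT hA hindep
    (measurableSet_singleton 1)).trans ?_
  rw [hA1]
  exact condExp_ae_eq_of_le_of_condExp_ae_eq heX.comap_le hX.comap_le hps hee

theorem propensity_score_balancing_survival {Ω : Type*} [MeasurableSpace Ω]
    [StandardBorelSpace Ω] [Nonempty Ω]
    (μ : Measure Ω) [IsProbabilityMeasure μ]
    {E : Type*} [MeasurableSpace E]
    (X : Ω → E) (T0 T1 A e : Ω → ℝ)
    (hX : Measurable X) (hT0 : Measurable T0) (hT1 : Measurable T1)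
    (hA : Measurable A) (he : Measurable e)
    (hAbin : ∀ ω, A ω = 0 ∨ A ω = 1)
    (hebdd : ∀ ω, 0 < e ω ∧ e ω < 1)
    -- e(X) is the propensity score: e = P(A = 1 | X), and is σ(X)-measurable
    (heX : Measurable[MeasurableSpace.comap X inferInstance] e)
    (hps : μ[A | MeasurableSpace.comap X inferInstance] =ᵐ[μ] e)
    -- conditional independence (T0, T1) ⫫ A | X
    (hci : CondIndepFun (MeasurableSpace.comap X inferInstance) (hX.comap_le)
      (fun ω => (T0 ω, T1 ω)) A μ)
    (τ : ℝ) (hτ : 0 < τ) :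
    μ[A | MeasurableSpace.comap (fun ω => (T0 ω, T1 ω, e ω)) inferInstance] =ᵐ[μ] e ∧
    CondIndepFun (MeasurableSpace.comap e inferInstance) (he.comap_le)
      (fun ω => (T0 ω, T1 ω)) A μ ∧
    CondIndepFun (MeasurableSpace.comap e inferInstance) (he.comap_le)
      (fun ω => (min (T0 ω) τ, min (T1 ω) τ)) A μ :=
  propensity_score_balancing_survival_general μ X T0 T1 A e hX hT0 hT1 hA he hAbin heX hps hci τ
end
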